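/- Let f: ℝ^{nd} → ℝ be convex, W symmetric positive semidefinite, λ > 0, and F(x) = f(x) + (λ/2)⟨x, Wx⟩. Let x* be a minimizer of f over {x : √W x = 0} with Lagrange multiplier y* (so x* minimizes x ↦ f(x) − ⟨y*, √W x⟩ globally). Let x_F* be a minimizer of F. If x^N satisfies F(x^N) − F(x_F*) ≤ ε, then f(x^N) − f(x*) ≤ ε and ‖√W x^N‖₂ ≤ 2‖y*‖₂/λ + √(2ε/λ). -/

import Mathlib

open Matrix

open scoped ComplexOrder in
/-- The positive semidefinite square root of a positive semidefinite matrix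
(definition as in Mathlib of December 2024, since removed). -/
noncomputable def Matrix.PosSemidef.sqrt {n : Type*} {𝕜 : Type*} [Fintype n] [RCLike 𝕜]
    [DecidableEq n] {A : Matrix n n 𝕜} (hA : A.PosSemidef) : Matrix n n 𝕜 :=
  hA.1.eigenvectorUnitary.1 * diagonal ((↑) ∘ (hA.1.eigenvalues · |>.sqrt))
    * (star hA.1.eigenvectorUnitary : Matrix n n 𝕜)

/-!
Write `S = √W`, so that `⟨x, Wx⟩ = ‖Sx‖²` and `F(x*) = f(x*)`. Optimality of `x_F*` gives
`F(x^N) ≤ F(x*) + ε = f(x*) + ε`, which already bounds `f(x^N) − f(x*)`. The Lagrangian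
inequality at `x^N` and Cauchy–Schwarz give `f(x*) ≤ f(x^N) + ‖y*‖ ‖Sx^N‖`, so `t = ‖Sx^N‖`
satisfies the quadratic inequality `(λ/2) t² ≤ ‖y*‖ t + ε`, whose solutions obey the bound.
-/

lemma Matrix.PosSemidef.posSemidef_sqrt {n : Type*} [Fintype n] [DecidableEq n]
    {A : Matrix n n ℝ} (hA : A.PosSemidef) : PosSemidef hA.sqrt := by
  unfold Matrix.PosSemidef.sqrt
  have hdiag := (posSemidef_diagonal_iff (R := ℝ) (n := n)
    (d := ((↑) ∘ (hA.1.eigenvalues · |>.sqrt)))).mpr fun i => by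
      simp only [Function.comp_apply]
      exact Real.sqrt_nonneg _
  simpa [Matrix.star_eq_conjTranspose, Function.comp_def] using
    hdiag.mul_mul_conjTranspose_same (hA.1.eigenvectorUnitary : Matrix n n ℝ)

lemma Matrix.PosSemidef.transpose_sqrt {n : Type*} [Fintype n] [DecidableEq n]
    {A : Matrix n n ℝ} (hA : A.PosSemidef) : hA.sqrtᵀ = hA.sqrt := by
  simpa [Matrix.IsHermitian, Matrix.conjTranspose_eq_transpose_of_trivial] using
    hA.posSemidef_sqrt.isHermitian

lemma Matrix.PosSemidef.sqrt_mul_self {n : Type*} [Fintype n] [DecidableEq n]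
    {A : Matrix n n ℝ} (hA : A.PosSemidef) : hA.sqrt * hA.sqrt = A := by
  set C : Matrix n n ℝ := hA.1.eigenvectorUnitary.1
  set E : Matrix n n ℝ := diagonal (RCLike.ofReal ∘ (hA.1.eigenvalues · |>.sqrt))
  have hCC : star C * C = 1 := Unitary.star_mul_self_of_mem hA.1.eigenvectorUnitary.2
  have hexpand : hA.sqrt * hA.sqrt = C * (E * (star C * C) * E) * star C := by
    show (C * E * star C) * (C * E * star C) = _
    simp only [Matrix.mul_assoc]
  rw [hexpand, hCC, Matrix.mul_one, diagonal_mul_diagonal]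
  conv_rhs => rw [hA.1.spectral_theorem, Unitary.conjStarAlgAut_apply]
  congr 3
  funext i
  simp only [Function.comp_apply, RCLike.ofReal_real_eq_id, id]
  exact Real.mul_self_sqrt (hA.eigenvalues_nonneg i)

lemma Matrix.dotProduct_mulVec_transpose_mul_self {m n : Type*} [Fintype m] [Fintype n]
    (S : Matrix m n ℝ) (x : n → ℝ) : x ⬝ᵥ (Sᵀ * S) *ᵥ x = S *ᵥ x ⬝ᵥ S *ᵥ x := by
  rw [← mulVec_mulVec, dotProduct_mulVec, vecMul_transpose]

lemma Matrix.PosSemidef.dotProduct_mulVec_eq_sqrt {n : Type*} [Fintype n] [DecidableEq n]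
    {A : Matrix n n ℝ} (hA : A.PosSemidef) (x : n → ℝ) :
    x ⬝ᵥ A *ᵥ x = hA.sqrt *ᵥ x ⬝ᵥ hA.sqrt *ᵥ x := by
  have h := dotProduct_mulVec_transpose_mul_self hA.sqrt x
  rwa [hA.transpose_sqrt, hA.sqrt_mul_self] at h

lemma Matrix.dotProduct_le_sqrt_mul_sqrt {n : Type*} [Fintype n] (v w : n → ℝ) :
    v ⬝ᵥ w ≤ √(v ⬝ᵥ v) * √(w ⬝ᵥ w) := by
  simpa only [dotProduct, sq] using Real.sum_mul_le_sqrt_mul_sqrt Finset.univ v w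

lemma le_two_mul_div_add_sqrt_of_half_mul_sq_le {lam s t ε : ℝ} (hlam : 0 < lam)
    (hs : 0 ≤ s) (h : lam / 2 * t ^ 2 ≤ s * t + ε) :
    t ≤ 2 * s / lam + √(2 * ε / lam) := by
  set u := √(2 * ε / lam)
  have hu : 0 ≤ u := Real.sqrt_nonneg _
  -- `u ^ 2 = max (2 * ε / lam) 0`, which also covers `ε < 0`
  have hu2 : 2 * ε ≤ lam * u ^ 2 := by
    rw [Real.sq_sqrt', ← div_le_iff₀' hlam]
    exact le_max_left _ _
  rw [div_add' _ _ _ hlam.ne', le_div_iff₀ hlam]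
  nlinarith [mul_nonneg hlam.le hu]

theorem stmt5_general {N : ℕ} (f : (Fin N → ℝ) → ℝ)
    (W : Matrix (Fin N) (Fin N) ℝ) (hW : W.PosSemidef)
    (lam ε : ℝ) (hlam : 0 < lam)
    (xstar ystar xF xN : Fin N → ℝ)
    (hfeas : hW.sqrt.mulVec xstar = 0)
    (hlag : ∀ x : Fin N → ℝ,
      f xstar - ystar ⬝ᵥ hW.sqrt.mulVec xstar ≤ f x - ystar ⬝ᵥ hW.sqrt.mulVec x)
    (hxF : ∀ y : Fin N → ℝ,
      f xF + lam / 2 * (xF ⬝ᵥ W.mulVec xF) ≤ f y + lam / 2 * (y ⬝ᵥ W.mulVec y))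
    (hN : f xN + lam / 2 * (xN ⬝ᵥ W.mulVec xN)
        - (f xF + lam / 2 * (xF ⬝ᵥ W.mulVec xF)) ≤ ε) :
    f xN - f xstar ≤ ε ∧
    Real.sqrt (hW.sqrt.mulVec xN ⬝ᵥ hW.sqrt.mulVec xN) ≤
      2 * Real.sqrt (ystar ⬝ᵥ ystar) / lam + Real.sqrt (2 * ε / lam) := by
  simp only [hW.dotProduct_mulVec_eq_sqrt] at hxF hN
  set a := hW.sqrt *ᵥ xN
  have hFxF_le : f xF + lam / 2 * (hW.sqrt *ᵥ xF ⬝ᵥ hW.sqrt *ᵥ xF) ≤ f xstar := by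
    simpa [hfeas] using hxF xstar
  have hlagN : f xstar ≤ f xN - ystar ⬝ᵥ a := by simpa [hfeas] using hlag xN
  have hCS := dotProduct_le_sqrt_mul_sqrt (-ystar) a
  rw [neg_dotProduct_neg, neg_dotProduct] at hCS
  have ha : 0 ≤ a ⬝ᵥ a := by simpa using dotProduct_self_star_nonneg a
  have hpen : 0 ≤ lam / 2 * (a ⬝ᵥ a) := by positivity
  refine ⟨by linarith, le_two_mul_div_add_sqrt_of_half_mul_sq_le hlam
    (Real.sqrt_nonneg _) ?_⟩
  rw [Real.sq_sqrt ha]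
  linarith

/-- Constraint gap theorem: an `ε`-minimizer `x^N` of the penalized objective
`F(x) = f(x) + (λ/2)⟨x, Wx⟩` satisfies `f(x^N) − f(x*) ≤ ε` and
`‖√W x^N‖ ≤ 2‖y*‖/λ + √(2ε/λ)`. -/
theorem stmt5 {N : ℕ} (f : (Fin N → ℝ) → ℝ) (hf : ConvexOn ℝ Set.univ f)
    (W : Matrix (Fin N) (Fin N) ℝ) (hW : W.PosSemidef)
    (lam ε : ℝ) (hlam : 0 < lam) (hε : 0 < ε)
    (xstar ystar xF xN : Fin N → ℝ)
    (hfeas : hW.sqrt.mulVec xstar = 0)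
    (hlag : ∀ x : Fin N → ℝ,
      f xstar - ystar ⬝ᵥ hW.sqrt.mulVec xstar ≤ f x - ystar ⬝ᵥ hW.sqrt.mulVec x)
    (hxF : ∀ y : Fin N → ℝ,
      f xF + lam / 2 * (xF ⬝ᵥ W.mulVec xF) ≤ f y + lam / 2 * (y ⬝ᵥ W.mulVec y))
    (hN : f xN + lam / 2 * (xN ⬝ᵥ W.mulVec xN)
        - (f xF + lam / 2 * (xF ⬝ᵥ W.mulVec xF)) ≤ ε) :
    f xN - f xstar ≤ ε ∧
    Real.sqrt (hW.sqrt.mulVec xN ⬝ᵥ hW.sqrt.mulVec xN) ≤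
      2 * Real.sqrt (ystar ⬝ᵥ ystar) / lam + Real.sqrt (2 * ε / lam) :=
  stmt5_general f W hW lam ε hlam xstar ystar xF xN hfeas hlag hxF hN
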